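/- Assume V is a variety with 0⃗ & 1⃗ whose language contains a constant, together with a binary term ∨ such that ∨^A is a semilattice operation on every A ∈ V, and let u₁,…,u_k be (2+l)-ary terms with V ⊨ x ≈ u₁(x,y,0⃗), V ⊨ u_i(x,y,1⃗) ≈ u_{i+1}(x,y,1⃗) for i odd, V ⊨ u_i(x,y,0⃗) ≈ u_{i+1}(x,y,0⃗) for i even, and V ⊨ u_k(x,y,1⃗) ≈ y. Then the formula Φ(x,y,z⃗) := ∀u ((⋀_{i=1}^{k} u_i(x,y,0⃗) ∨ u = u_i(x,y,z⃗) ∨ u) → x ∨ u = y ∨ u) witnesses Definable Factor Congruences for V: for all A, B ∈ V, a,c ∈ A and b,d ∈ B, A×B ⊨ Φ(⟨a,b⟩,⟨c,d⟩,[0⃗,1⃗]) if and only if a = c. -/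

import Mathlib

open FirstOrder Language

universe u v w

namespace Paper

variable {L : FirstOrder.Language.{v, w}}

/-- The direct product of two `L`-structures, with pointwise operations. -/
instance prodStructure (A : Type*) (B : Type*) [L.Structure A] [L.Structure B] :
    L.Structure (A × B) where
  funMap f x := (Structure.funMap f fun i => (x i).1, Structure.funMap f fun i => (x i).2)
  RelMap r x := Structure.RelMap r (fun i => (x i).1) ∧ Structure.RelMap r fun i => (x i).2

/-- The interpretation of a closed term in an algebra. -/
def interp (A : Type u) [L.Structure A] (t : L.Term Empty) : A := t.realize Empty.elim

/-- A theory is equational when each axiom is a universally quantified equation. -/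
def IsEquational (T : L.Theory) : Prop :=
  ∀ φ ∈ T, ∃ (n : ℕ) (t₁ t₂ : L.Term (Empty ⊕ Fin n)), φ = (t₁.bdEqual t₂).alls

/-- `Mod(T)` is a variety with `0⃗` & `1⃗`. -/
def HasZeroOne (T : L.Theory) {l : ℕ} (z o : Fin l → L.Term Empty) : Prop :=
  ∀ (A : Type u) [L.Structure A], A ⊨ T → Nonempty A →
    (∀ i, interp A (z i) = interp A (o i)) → ∀ x y : A, x = y

/-- The binary operation interpreting a binary term. -/
def binOp (j : L.Term (Fin 2)) {A : Type u} [L.Structure A] (a b : A) : A :=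
  j.realize ![a, b]

/-- The interpretation of a `(2+l)`-ary term `u(x, y, w⃗)` at `x, y` and a tuple `w⃗`. -/
def binParam {l : ℕ} (u : L.Term (Fin 2 ⊕ Fin l)) {A : Type u} [L.Structure A]
    (a b : A) (w : Fin l → A) : A :=
  u.realize (Sum.elim ![a, b] w)

end Paper

/-!
In `A × B` the tuple `[0⃗, 1⃗]` is `0⃗` in the first coordinate and `1⃗` in the second, so for
`p = (p₁, p₂)` the premise of `Φ` only constrains `p₂`, while its conclusion demands
`a ∨ p₁ = c ∨ p₁` for all `p₁`, i.e. `a = c`. If `a = c`, the premise says that `_ ∨ p₂`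
identifies `uᵢ(b,d,0⃗)` with `uᵢ(b,d,1⃗)`, and the chain identities then carry
`b = u₁(b,d,0⃗)` to `u_k(b,d,1⃗) = d`. For the other direction, a `p₂` above every
`uᵢ(b,d,0⃗)` and `uᵢ(b,d,1⃗)` absorbs them all, so the premise of `Φ` holds for it and every `p₁`.
-/

section Semilattice

variable {α : Type*} (op : α → α → α)

theorem exists_forall_op_eq_of_semilattice [Nonempty α] (idem : ∀ a, op a a = a)
    (comm : ∀ a b, op a b = op b a) (assoc : ∀ a b c, op (op a b) c = op a (op b c))
    {ι : Type*} [Finite ι] (x : ι → α) : ∃ p, ∀ i, op (x i) p = p := by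
  let : Max α := ⟨op⟩
  let : SemilatticeSup α := SemilatticeSup.mk' comm assoc idem
  obtain ⟨p, hp⟩ := Finite.exists_le x
  exact ⟨p, fun i => sup_eq_right.2 (hp i)⟩

theorem eq_of_forall_op_eq (idem : ∀ a, op a a = a) (comm : ∀ a b, op a b = op b a) {a c : α}
    (h : ∀ p, op a p = op c p) : a = c :=
  calc a = op c a := (idem a).symm.trans (h a)
    _ = op a c := comm c a
    _ = c := (h c).trans (idem c)

end Semilattice

/-- A Mal'cev chain `x = v₀ ~ w₀ = w₁ ~ v₁ = v₂ ~ w₂ = w₃ ~ ⋯ ~ w_{k-1} = y`, where `~` is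
equality under `f`, forces `f x = f y`. -/
theorem apply_eq_apply_of_malcev_chain {β γ : Type*} (f : β → γ) {k : ℕ} (hk : 0 < k)
    (v w : Fin k → β) (hvw : ∀ i, f (v i) = f (w i)) {x y : β} (hx : v ⟨0, hk⟩ = x)
    (hw : ∀ (i : Fin k) (h : i.1 + 1 < k), Even i.1 → w i = w ⟨i.1 + 1, h⟩)
    (hv : ∀ (i : Fin k) (h : i.1 + 1 < k), Odd i.1 → v i = v ⟨i.1 + 1, h⟩)
    (hy : w ⟨k - 1, Nat.sub_one_lt_of_lt hk⟩ = y) : f x = f y := by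
  have chain : ∀ n (hn : n < k), f x = f (w ⟨n, hn⟩) := by
    intro n
    induction n with
    | zero => exact fun hn => hx ▸ hvw ⟨0, hn⟩
    | succ n ih =>
      intro hn
      rcases Nat.even_or_odd n with hn₂ | hn₂
      · rw [← hw ⟨n, by omega⟩ hn hn₂]
        exact ih (by omega)
      · rw [← hvw, ← hv ⟨n, by omega⟩ hn hn₂, hvw]
        exact ih (by omega)
  exact hy ▸ chain (k - 1) (by omega)

namespace Paper

variable {L : FirstOrder.Language.{v, w}} {A B : Type u} [L.Structure A] [L.Structure B]

theorem realize_prod {α : Type*} (t : L.Term α) (x : α → A × B) :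
    t.realize x = (t.realize fun a => (x a).1, t.realize fun a => (x a).2) := by
  induction t with
  | var => rfl
  | func f ts ih => simp only [Term.realize, ih]; rfl

theorem binOp_prod (j : L.Term (Fin 2)) (a c : A) (b d : B) :
    binOp j ((a, b) : A × B) (c, d) = (binOp j a c, binOp j b d) := by
  rw [binOp, realize_prod]
  congr 2 <;> funext x <;> fin_cases x <;> rfl

theorem binParam_prod {l : ℕ} (t : L.Term (Fin 2 ⊕ Fin l)) (a c : A) (b d : B)
    (x : Fin l → A × B) :
    binParam t ((a, b) : A × B) (c, d) x
      = (binParam t a c fun i => (x i).1, binParam t b d fun i => (x i).2) := by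
  rw [binParam, realize_prod]
  congr 2 <;> funext i <;> rcases i with i | i <;> (try fin_cases i) <;> rfl

end Paper

/-- **Proposition 6.2 (Semilattice expansions).** Let `V` be a variety with
`0⃗` & `1⃗` possessing a binary term `∨` which is a semilattice operation on every
member of `V`, and let `u₁, …, u_k` be `(2+l)`-ary terms satisfying the Mal'cev
chain identities for `(x, y) ∈ Cg(0⃗, 1⃗)`.  Then the formula
`Φ(x,y,z⃗) = ∀u ((⋀ᵢ uᵢ(x,y,0⃗) ∨ u = uᵢ(x,y,z⃗) ∨ u) → x ∨ u = y ∨ u)`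
witnesses Definable Factor Congruences for `V`. -/
theorem semilattice_formula_witnesses_DFC {L : FirstOrder.Language.{v, w}}
    (T : L.Theory) {l : ℕ} (z o : Fin l → L.Term Empty)
    (j : L.Term (Fin 2))
    (hsemi : ∀ (A : Type u) [L.Structure A], A ⊨ T → Nonempty A →
      (∀ a : A, Paper.binOp j a a = a) ∧
      (∀ a b : A, Paper.binOp j a b = Paper.binOp j b a) ∧
      (∀ a b c : A, Paper.binOp j (Paper.binOp j a b) c
        = Paper.binOp j a (Paper.binOp j b c)))
    {k : ℕ} (hk : 0 < k) (u : Fin k → L.Term (Fin 2 ⊕ Fin l))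
    (hu1 : ∀ (A : Type u) [L.Structure A], A ⊨ T → Nonempty A → ∀ x y : A,
      Paper.binParam (u ⟨0, hk⟩) x y (fun i => Paper.interp A (z i)) = x)
    (huodd : ∀ (A : Type u) [L.Structure A], A ⊨ T → Nonempty A → ∀ x y : A,
      ∀ i : Fin k, ∀ _h : i.1 + 1 < k, Even i.1 →
        Paper.binParam (u i) x y (fun i' => Paper.interp A (o i')) =
        Paper.binParam (u ⟨i.1 + 1, _h⟩) x y (fun i' => Paper.interp A (o i')))
    (hueven : ∀ (A : Type u) [L.Structure A], A ⊨ T → Nonempty A → ∀ x y : A,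
      ∀ i : Fin k, ∀ _h : i.1 + 1 < k, Odd i.1 →
        Paper.binParam (u i) x y (fun i' => Paper.interp A (z i')) =
        Paper.binParam (u ⟨i.1 + 1, _h⟩) x y (fun i' => Paper.interp A (z i')))
    (huk : ∀ (A : Type u) [L.Structure A], A ⊨ T → Nonempty A → ∀ x y : A,
      Paper.binParam (u ⟨k - 1, by omega⟩) x y (fun i => Paper.interp A (o i)) = y) :
    ∀ (A : Type u) (B : Type u) [L.Structure A] [L.Structure B],
      A ⊨ T → B ⊨ T → Nonempty A → Nonempty B →
        ∀ (a c : A) (b d : B),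
          (∀ p : A × B,
            (∀ i : Fin k,
              Paper.binOp j (Paper.binParam (u i) ((a, b) : A × B) ((c, d) : A × B)
                (fun i' => (Paper.interp A (z i'), Paper.interp B (z i')))) p =
              Paper.binOp j (Paper.binParam (u i) ((a, b) : A × B) ((c, d) : A × B)
                (fun i' => (Paper.interp A (z i'), Paper.interp B (o i')))) p) →
            Paper.binOp j ((a, b) : A × B) p = Paper.binOp j ((c, d) : A × B) p) ↔
          a = c := by
  intro A B _ _ hA hB _ _ a c b d
  simp only [Prod.forall, Paper.binParam_prod, Paper.binOp_prod, Prod.ext_iff, true_and]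
  obtain ⟨idemA, commA, -⟩ := hsemi A hA ‹_›
  obtain ⟨idemB, commB, assocB⟩ := hsemi B hB ‹_›
  set zB : Fin l → B := fun i => Paper.interp B (z i)
  set oB : Fin l → B := fun i => Paper.interp B (o i)
  constructor
  · intro hΦ
    obtain ⟨p₂, hp₂⟩ := exists_forall_op_eq_of_semilattice (Paper.binOp j) idemB commB assocB
      fun ie : Fin k × Bool => Paper.binParam (u ie.1) b d (if ie.2 then oB else zB)
    refine eq_of_forall_op_eq (Paper.binOp j) idemA commA fun p₁ => (hΦ p₁ p₂ fun i => ?_).1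
    exact (hp₂ (i, false)).trans (hp₂ (i, true)).symm
  · rintro rfl p₁ p₂ hΦ
    exact ⟨rfl, apply_eq_apply_of_malcev_chain (Paper.binOp j · p₂) hk
      (fun i => Paper.binParam (u i) b d zB) (fun i => Paper.binParam (u i) b d oB) hΦ
      (hu1 B hB ‹_› b d) (huodd B hB ‹_› b d) (hueven B hB ‹_› b d) (huk B hB ‹_› b d)⟩
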